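/- Let G, c > 0 be real constants, let ρ : ℝ³ → ℝ be a function, and let Ψ : ℝ³ → ℝ be twice continuously differentiable with Ψ(x) > 0 for all x, satisfying ΔΨ = (4πG/c²)·ρ·Ψ everywhere on ℝ³. Define Φ := (c²/2)·Ψ². Then Φ satisfies ΔΦ = (8πG/c²)·[ρ·Φ + (c²/(16πG))·‖∇Φ‖²/Φ] everywhere on ℝ³, where Δ is the Euclidean Laplacian and ∇ the gradient on ℝ³. -/

import Mathlib

open Real

/-- The `i`-th partial derivative of a function on Euclidean `ℝ³`. -/
noncomputable def pderiv3 (i : Fin 3) (f : EuclideanSpace ℝ (Fin 3) → ℝ)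
    (x : EuclideanSpace ℝ (Fin 3)) : ℝ :=
  fderiv ℝ f x (EuclideanSpace.single i 1)

/-- The Euclidean Laplacian on `ℝ³`. -/
noncomputable def lap3 (f : EuclideanSpace ℝ (Fin 3) → ℝ)
    (x : EuclideanSpace ℝ (Fin 3)) : ℝ :=
  ∑ i, pderiv3 i (pderiv3 i f) x

/-- The squared norm of the gradient, `‖∇f‖²`, on `ℝ³`. -/
noncomputable def gradSq3 (f : EuclideanSpace ℝ (Fin 3) → ℝ)
    (x : EuclideanSpace ℝ (Fin 3)) : ℝ :=
  ∑ i, (pderiv3 i f x) ^ 2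

/-!
With `Φ = (c²/2) Ψ²` one has `∇Φ = c² Ψ ∇Ψ` and `ΔΦ = c² (Ψ ΔΨ + ‖∇Ψ‖²)`. The first term is
`(8πG/c²) ρ Φ` by the field equation for `Ψ`, and the second is `‖∇Φ‖² / (2Φ)`.
-/

section

variable (i : Fin 3) {f g : EuclideanSpace ℝ (Fin 3) → ℝ} {x : EuclideanSpace ℝ (Fin 3)}

lemma pderiv3_const_mul (a : ℝ) :
    pderiv3 i (fun y => a * f y) = fun y => a * pderiv3 i f y := by
  funext y
  simp only [pderiv3, ← smul_eq_mul, ← Pi.smul_def, fderiv_const_smul_field, Pi.smul_apply,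
    smul_apply]

lemma pderiv3_mul (hf : DifferentiableAt ℝ f x) (hg : DifferentiableAt ℝ g x) :
    pderiv3 i (fun y => f y * g y) x = pderiv3 i f x * g x + f x * pderiv3 i g x := by
  simp only [pderiv3, fderiv_fun_mul hf hg, add_apply, smul_apply, smul_eq_mul]
  ring

lemma pderiv3_sq (hf : DifferentiableAt ℝ f x) :
    pderiv3 i (fun y => f y ^ 2) x = 2 * (f x * pderiv3 i f x) := by
  simp only [sq, pderiv3_mul i hf hf]
  ring

lemma ContDiff.differentiable_pderiv3 (hf : ContDiff ℝ 2 f) : Differentiable ℝ (pderiv3 i f) :=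
  ((hf.fderiv_right (m := 1) le_rfl).clm_apply contDiff_const).differentiable one_ne_zero

lemma lap3_const_mul (a : ℝ) : lap3 (fun y => a * f y) x = a * lap3 f x := by
  simp only [lap3, pderiv3_const_mul, Finset.mul_sum]

lemma gradSq3_const_mul (a : ℝ) : gradSq3 (fun y => a * f y) x = a ^ 2 * gradSq3 f x := by
  simp only [gradSq3, pderiv3_const_mul, mul_pow, Finset.mul_sum]

lemma gradSq3_sq (hf : DifferentiableAt ℝ f x) :
    gradSq3 (fun y => f y ^ 2) x = 4 * f x ^ 2 * gradSq3 f x := by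
  simp only [gradSq3, pderiv3_sq _ hf, Finset.mul_sum]
  exact Finset.sum_congr rfl fun i _ => by ring

lemma pderiv3_pderiv3_sq (hf : ContDiff ℝ 2 f) :
    pderiv3 i (pderiv3 i fun y => f y ^ 2) x =
      2 * (f x * pderiv3 i (pderiv3 i f) x + pderiv3 i f x ^ 2) := by
  have hf1 : Differentiable ℝ f := hf.differentiable two_ne_zero
  have hsq : pderiv3 i (fun y => f y ^ 2) = fun y => 2 * (f y * pderiv3 i f y) :=
    funext fun y => pderiv3_sq i (hf1 y)
  simp only [hsq, pderiv3_const_mul, pderiv3_mul i (hf1 x) (hf.differentiable_pderiv3 i x)]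
  ring

lemma lap3_sq (hf : ContDiff ℝ 2 f) :
    lap3 (fun y => f y ^ 2) x = 2 * (f x * lap3 f x + gradSq3 f x) := by
  simp only [lap3, gradSq3, pderiv3_pderiv3_sq _ hf, ← Finset.mul_sum, Finset.sum_add_distrib]

end

/-- If the lapse `Ψ > 0` is `C²` and satisfies
`ΔΨ = (4πG/c²)ρΨ` (the time component of Einstein's equations for static
dust), then `Φ := (c²/2)Ψ²` satisfies the Prague-type equation
`ΔΦ = (8πG/c²)[ρΦ + (c²/(16πG))‖∇Φ‖²/Φ]`, i.e. the 1912 equation with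
`G` replaced by `2G`. -/
theorem GR_static_dust_prague_form
    (G c : ℝ) (hG : 0 < G) (hc : 0 < c)
    (ρ Ψ : EuclideanSpace ℝ (Fin 3) → ℝ)
    (hΨ : ContDiff ℝ 2 Ψ) (hΨpos : ∀ x, 0 < Ψ x)
    (heq : ∀ x, lap3 Ψ x = (4 * π * G / c ^ 2) * ρ x * Ψ x) :
    ∀ x, lap3 (fun y => (c ^ 2 / 2) * (Ψ y) ^ 2) x =
      (8 * π * G / c ^ 2) *
        (ρ x * ((c ^ 2 / 2) * (Ψ x) ^ 2) +
          (c ^ 2 / (16 * π * G)) *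
            gradSq3 (fun y => (c ^ 2 / 2) * (Ψ y) ^ 2) x /
              ((c ^ 2 / 2) * (Ψ x) ^ 2)) := by
  intro x
  have hΨx : Ψ x ≠ 0 := (hΨpos x).ne'
  rw [lap3_const_mul, lap3_sq hΨ, heq, gradSq3_const_mul,
    gradSq3_sq ((hΨ.differentiable two_ne_zero) x)]
  field_simp
  ring
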